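/- arXiv:2009.10111 — 2 statements merged into one kernel-verified Lean document; each statement's English description precedes it below -/
import Mathlib

section
/- Let $L_1, L_2$ be affine $d$-planes in $\mathbb{R}^n$ both intersecting the ball $0.5B$, where $B = B(x,r)$. Set $\mathcal{P}_i = \mathcal{H}^d|_{L_i}$. Then $\frac{1}{r^d} F_B(\mathcal{P}_1, \mathcal{P}_2) \le C\, \mathrm{dist}_H(L_1 \cap B, L_2 \cap B)$, where $\mathrm{dist}_H$ denotes the Hausdorff distance and $C$ depends only on $n$ and $d$. -/
open MeasureTheory Metric Set

noncomputable def Fdist {n : ℕ} (B : Set (EuclideanSpace ℝ (Fin n)))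
    (μ ν : Measure (EuclideanSpace ℝ (Fin n)))
    (f g : EuclideanSpace ℝ (Fin n) → ℝ) : ℝ :=
  ⨆ φ : {φ : EuclideanSpace ℝ (Fin n) → ℝ // LipschitzWith 1 φ ∧ Function.support φ ⊆ B},
    |(∫ x, φ.1 x * f x ∂μ) - ∫ x, φ.1 x * g x ∂ν|

open scoped ENNReal NNReal

/-!
Let `π` be the orthogonal projection onto `L₂` and `δ` the Hausdorff distance. If `δ ≥ r/8`
the bound is trivial, since each integral is `O(r^(d+1))`. Otherwise `π` moves the points of
`L₁ ∩ B` by at most `δ`; comparing the images of `p` and `p + u` for `p ∈ L₁ ∩ ½B` and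
`|u| = r/2` shows that on the direction of `L₁` the linear part of `π` is the identity up to a
relative error `ε = 4δ/r`. Hence `π` maps `L₁` bijectively onto `L₂`, is `1`-Lipschitz and
`(1-ε)⁻¹`-antilipschitz there, so `ℋ^d|L₂ ≤ π_*(ℋ^d|L₁) ≤ (1-ε)^(-d) ℋ^d|L₂`, and `π` moves the
points of `L₁` that matter by `O(δ)`. Then `∫φ dℋ^d|L₁ - ∫φ∘π dℋ^d|L₁` and
`∫φ d(π_*ℋ^d|L₁) - ∫φ dℋ^d|L₂` are both `O(δ r^d)`.
-/

section Integrals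

variable {X : Type*} [MeasurableSpace X] {μ ν : Measure X} {s : Set X} {φ : X → ℝ} {c : ℝ}

theorem abs_integral_le_of_ae_compl_eq_zero (hμs : μ s ≠ ∞)
    (hφs : ∀ᵐ y ∂μ, y ∉ s → φ y = 0) (hφc : ∀ᵐ y ∂μ, y ∈ s → |φ y| ≤ c) :
    |∫ y, φ y ∂μ| ≤ c * μ.real s := by
  rw [← setIntegral_eq_integral_of_ae_compl_eq_zero hφs]
  simpa only [Real.norm_eq_abs] using norm_setIntegral_le_of_norm_le_const_ae' (f := φ)
    hμs.lt_top (by simpa only [Real.norm_eq_abs] using hφc)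

theorem integrable_of_ae_compl_eq_zero (hμs : μ s ≠ ∞) (hφ : AEStronglyMeasurable φ μ)
    (hφs : ∀ᵐ y ∂μ, y ∉ s → φ y = 0) (hφc : ∀ᵐ y ∂μ, |φ y| ≤ c) : Integrable φ μ :=
  (Measure.integrableOn_of_bounded hμs hφ (ae_restrict_of_ae hφc)).integrable_of_ae_notMem_eq_zero
    hφs

theorem abs_integral_sub_le_of_le (hμν : μ ≤ ν) (hνs : ν s ≠ ∞) (hφ : Measurable φ)
    (hφs : Function.support φ ⊆ s) (hφc : ∀ y, |φ y| ≤ c) :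
    |∫ y, φ y ∂ν - ∫ y, φ y ∂μ| ≤ c * (ν.real s - μ.real s) := by
  rw [Function.support_subset_iff'] at hφs
  have hμs : μ s ≠ ∞ := ne_top_of_le_ne_top hνs (hμν s)
  have := isFiniteMeasure_restrict.2 hμs
  have := isFiniteMeasure_restrict.2 hνs
  have hle : μ.restrict s ≤ ν.restrict s := Measure.restrict_mono subset_rfl hμν
  set ρ := ν.restrict s - μ.restrict s
  have : IsFiniteMeasure ρ := isFiniteMeasure_of_le _ Measure.sub_le
  have hint (m : Measure X) [IsFiniteMeasure m] : Integrable φ m :=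
    .of_bound hφ.aestronglyMeasurable c (ae_of_all _ fun y ↦ (Real.norm_eq_abs _).trans_le (hφc y))
  have hρ : ρ.real univ = ν.real s - μ.real s := by
    rw [measureReal_def, Measure.sub_apply MeasurableSet.univ hle, Measure.restrict_apply_univ,
      Measure.restrict_apply_univ, ENNReal.toReal_sub_of_le (hμν s) hνs, measureReal_def,
      measureReal_def]
  rw [← setIntegral_eq_integral_of_forall_compl_eq_zero hφs,
    ← setIntegral_eq_integral_of_forall_compl_eq_zero (μ := μ) hφs,
    ← Measure.sub_add_cancel_of_le hle, integral_add_measure (hint _) (hint _),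
    add_sub_cancel_right, ← hρ]
  simpa only [Real.norm_eq_abs] using norm_integral_le_of_norm_le_const (μ := ρ) (f := φ)
    (ae_of_all _ (by simpa only [Real.norm_eq_abs] using hφc))

theorem abs_integral_comp_sub_integral_le [PseudoMetricSpace X] [OpensMeasurableSpace X]
    (hφ : LipschitzWith 1 φ) (hφs : Function.support φ ⊆ s) (hφc : ∀ y, |φ y| ≤ c) {S : Set X}
    (hsS : s ⊆ S) (hμS : μ S ≠ ∞) {g : X → X} (hg : Measurable g)
    (hgS : ∀ᵐ y ∂μ, g y ∈ s → y ∈ S) {η : ℝ} (hgη : ∀ᵐ y ∂μ, y ∈ S → dist (g y) y ≤ η) :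
    |∫ y, φ (g y) ∂μ - ∫ y, φ y ∂μ| ≤ η * μ.real S := by
  rw [Function.support_subset_iff'] at hφs
  have hφm := hφ.continuous.measurable
  have hφS : ∀ y ∉ S, φ y = 0 := fun y hy ↦ hφs y fun h ↦ hy (hsS h)
  have hφgS : ∀ᵐ y ∂μ, y ∉ S → φ (g y) = 0 := hgS.mono fun y h hy ↦ hφs _ (mt h hy)
  rw [← integral_sub
    (integrable_of_ae_compl_eq_zero (φ := fun y ↦ φ (g y)) hμS
      (hφm.comp hg).aestronglyMeasurable hφgS (ae_of_all _ fun y ↦ hφc (g y)))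
    (integrable_of_ae_compl_eq_zero hμS hφm.aestronglyMeasurable (ae_of_all _ hφS)
      (ae_of_all _ hφc))]
  refine abs_integral_le_of_ae_compl_eq_zero hμS ?_ ?_
  · filter_upwards [hφgS] with y hy hyS
    rw [hy hyS, hφS y hyS, sub_self]
  · filter_upwards [hgη] with y hy hyS
    simpa [← Real.dist_eq] using (hφ.dist_le_mul (g y) y).trans (by simpa using hy hyS)

end Integrals

section HausdorffMeasure

variable {X Y : Type*} [MetricSpace X] [MeasurableSpace X] [BorelSpace X]
  [MetricSpace Y] [MeasurableSpace Y] [BorelSpace Y] {f : X → Y} {s : Set X} {t : Set Y}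
  {d : ℝ}

theorem restrict_hausdorffMeasure_le_map (hfm : Measurable f) (hf : LipschitzOnWith 1 f s)
    (hst : SurjOn f s t) (hd : 0 ≤ d) :
    μH[d].restrict t ≤ (μH[d].restrict s).map f := by
  refine Measure.le_iff.2 fun A hA ↦ ?_
  rw [Measure.map_apply hfm hA, Measure.restrict_apply hA, Measure.restrict_apply (hfm hA)]
  calc μH[d] (A ∩ t) ≤ μH[d] (f '' (f ⁻¹' A ∩ s)) := measure_mono fun q ⟨hqA, hqt⟩ ↦ by
        obtain ⟨y, hy, rfl⟩ := hst hqt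
        exact ⟨y, ⟨hqA, hy⟩, rfl⟩
    _ ≤ μH[d] (f ⁻¹' A ∩ s) := by
        simpa using (hf.mono inter_subset_right).hausdorffMeasure_image_le hd

theorem map_restrict_hausdorffMeasure_le (hfm : Measurable f) (hst : MapsTo f s t) {K : ℝ≥0}
    (hK : ∀ y ∈ s, ∀ z ∈ s, dist y z ≤ K * dist (f y) (f z)) (hd : 0 ≤ d) :
    (μH[d].restrict s).map f ≤ ((K : ℝ≥0∞) ^ d) • μH[d].restrict t := by
  rcases s.eq_empty_or_nonempty with rfl | ⟨y₀, -⟩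
  · rw [Measure.restrict_empty, Measure.map_zero]
    exact Measure.zero_le _
  have : Nonempty X := ⟨y₀⟩
  have hinj : InjOn f s := fun y hy z hz hyz ↦
    dist_le_zero.1 (by simpa [hyz] using hK y hy z hz)
  have hg : LipschitzOnWith K (Function.invFunOn f s) (f '' s) := by
    refine LipschitzOnWith.of_dist_le_mul ?_
    rintro _ ⟨y, hy, rfl⟩ _ ⟨z, hz, rfl⟩
    rw [hinj.leftInvOn_invFunOn hy, hinj.leftInvOn_invFunOn hz]
    exact hK y hy z hz
  refine Measure.le_iff.2 fun A hA ↦ ?_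
  rw [Measure.map_apply hfm hA, Measure.restrict_apply (hfm hA), Measure.smul_apply,
    Measure.restrict_apply hA, smul_eq_mul]
  calc μH[d] (f ⁻¹' A ∩ s) ≤ μH[d] (Function.invFunOn f s '' (A ∩ f '' s)) :=
        measure_mono fun y ⟨hyA, hy⟩ ↦
          ⟨f y, ⟨hyA, mem_image_of_mem f hy⟩, hinj.leftInvOn_invFunOn hy⟩
    _ ≤ (K : ℝ≥0∞) ^ d * μH[d] (A ∩ f '' s) :=
        (hg.mono inter_subset_right).hausdorffMeasure_image_le hd
    _ ≤ (K : ℝ≥0∞) ^ d * μH[d] (A ∩ t) := by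
        gcongr
        exact hst.image_subset

end HausdorffMeasure

noncomputable def unitBallMass (d : ℕ) : ℝ :=
  μH[(d : ℝ)].real (ball (0 : EuclideanSpace ℝ (Fin d)) 1)

theorem unitBallMass_pos (d : ℕ) : 0 < unitBallMass d :=
  ENNReal.toReal_pos (measure_ball_pos _ _ one_pos).ne' measure_ball_lt_top.ne

theorem LipschitzWith.abs_le_of_support_subset_ball {E : Type*} [NormedAddCommGroup E]
    [NormedSpace ℝ E] [Nontrivial E] {φ : E → ℝ} (hφ : LipschitzWith 1 φ) {x : E} {r : ℝ}
    (hr : 0 ≤ r) (hsupp : Function.support φ ⊆ ball x r) (y : E) : |φ y| ≤ 2 * r := by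
  obtain ⟨z, hz⟩ := (NormedSpace.sphere_nonempty (x := x)).2 hr
  have hφz : φ z = 0 := Function.notMem_support.1 fun h ↦ by
    simpa [mem_sphere.1 hz] using hsupp h
  by_cases hy : y ∈ ball x r
  · rw [← sub_zero (φ y), ← hφz, ← Real.dist_eq]
    calc dist (φ y) (φ z) ≤ dist y z := by simpa using hφ.dist_le_mul y z
      _ ≤ dist y x + dist x z := dist_triangle _ _ _
      _ ≤ 2 * r := by rw [dist_comm x z, mem_sphere.1 hz]; linarith [mem_ball.1 hy]
  · rw [Function.notMem_support.1 fun h ↦ hy (hsupp h), abs_zero]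
    positivity

theorem inv_one_sub_pow_sub_one_le (d : ℕ) {ε : ℝ} (hε₀ : 0 ≤ ε) (hε : ε ≤ 1 / 2) :
    (1 - ε)⁻¹ ^ d - 1 ≤ d * 2 ^ d * ε := by
  have hpos : 0 < (1 - ε) ^ d := by apply pow_pos; linarith
  have hbern : 1 - d * ε ≤ (1 - ε) ^ d := by
    simpa [sub_eq_add_neg] using one_add_mul_le_pow (a := -ε) (by linarith) d
  have hhalf : 1 ≤ 2 ^ d * (1 - ε) ^ d := by
    rw [← mul_pow]; exact one_le_pow₀ (by linarith)
  rw [inv_pow, sub_le_iff_le_add, inv_le_iff_one_le_mul₀ hpos]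
  nlinarith [mul_nonneg (mul_nonneg (Nat.cast_nonneg (α := ℝ) d) hε₀) (sub_nonneg.2 hhalf)]

theorem Submodule.norm_apply_le_of_forall_norm_eq {E F : Type*} [NormedAddCommGroup E]
    [NormedSpace ℝ E] [NormedAddCommGroup F] [NormedSpace ℝ F] (W : Submodule ℝ E)
    (g : E →ₗ[ℝ] F) {ρ c : ℝ} (hρ : 0 < ρ) (h : ∀ u ∈ W, ‖u‖ = ρ → ‖g u‖ ≤ c) {w : E}
    (hw : w ∈ W) : ‖g w‖ ≤ c / ρ * ‖w‖ := by
  rcases eq_or_ne w 0 with rfl | hw0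
  · simp
  have hwpos : 0 < ‖w‖ := norm_pos_iff.2 hw0
  have hu := h ((ρ / ‖w‖) • w) (W.smul_mem _ hw) (by
    rw [norm_smul, Real.norm_of_nonneg (by positivity), div_mul_cancel₀ _ hwpos.ne'])
  rw [map_smul, norm_smul, Real.norm_of_nonneg (by positivity)] at hu
  rw [div_mul_eq_mul_div, le_div_iff₀ hρ]
  calc ‖g w‖ * ρ = ‖w‖ * (ρ / ‖w‖ * ‖g w‖) := by field_simp
    _ ≤ ‖w‖ * c := by gcongr
    _ = c * ‖w‖ := mul_comm _ _

section InnerProductSpace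

variable {E : Type*} [NormedAddCommGroup E] [InnerProductSpace ℝ E] [FiniteDimensional ℝ E]

namespace AffineSubspace

variable [MeasurableSpace E] [BorelSpace E] {d : ℕ} (L : AffineSubspace ℝ E)

theorem hausdorffMeasure_ball_inter_le (hL : Module.finrank ℝ L.direction = d) (q : E) {R : ℝ}
    (hR : 0 ≤ R) :
    μH[(d : ℝ)] (ball q R ∩ L) ≤
      ENNReal.ofReal ((2 * R) ^ d) * μH[(d : ℝ)] (ball (0 : EuclideanSpace ℝ (Fin d)) 1) := by
  rcases (ball q R ∩ (L : Set E)).eq_empty_or_nonempty with h | ⟨p, hpq, hpL⟩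
  · simp [h]
  subst hL
  let e := (stdOrthonormalBasis ℝ L.direction).repr.symm
  let g : EuclideanSpace ℝ (Fin _) → E := fun v ↦ (e v : E) + p
  have hg : Isometry g :=
    (IsometryEquiv.addRight p).isometry.comp (isometry_subtype_coe.comp e.isometry)
  have hsub : ball q R ∩ L ⊆ g '' closedBall 0 (2 * R) := by
    rintro y ⟨hyq, hyL⟩
    refine ⟨e.symm ⟨y - p, L.vsub_mem_direction hyL hpL⟩, ?_, by simp [g]⟩
    rw [mem_closedBall_zero_iff, LinearIsometryEquiv.norm_map, Submodule.coe_norm,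
      ← dist_eq_norm]
    linarith [dist_triangle_right y p q, mem_ball.1 hyq, mem_ball.1 hpq]
  calc μH[_] (ball q R ∩ L) ≤ μH[_] (g '' closedBall 0 (2 * R)) := measure_mono hsub
    _ = μH[_] (closedBall (0 : EuclideanSpace ℝ (Fin _)) (2 * R)) :=
        hg.hausdorffMeasure_image (Or.inl (by positivity)) _
    _ = _ := by rw [Measure.addHaar_closedBall _ _ (by positivity), finrank_euclideanSpace_fin]

theorem restrict_hausdorffMeasure_ball_ne_top (hL : Module.finrank ℝ L.direction = d) (q : E)
    {R : ℝ} (hR : 0 ≤ R) : μH[(d : ℝ)].restrict L (ball q R) ≠ ∞ := by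
  rw [Measure.restrict_apply measurableSet_ball]
  exact ne_top_of_le_ne_top (ENNReal.mul_ne_top ENNReal.ofReal_ne_top measure_ball_lt_top.ne)
    (L.hausdorffMeasure_ball_inter_le hL q hR)

theorem restrict_hausdorffMeasure_real_ball_le (hL : Module.finrank ℝ L.direction = d) (q : E)
    {R : ℝ} (hR : 0 ≤ R) :
    (μH[(d : ℝ)].restrict L).real (ball q R) ≤ unitBallMass d * (2 * R) ^ d := by
  rw [measureReal_def, Measure.restrict_apply measurableSet_ball, mul_comm, unitBallMass,
    measureReal_def, ← ENNReal.toReal_ofReal (by positivity : (0 : ℝ) ≤ (2 * R) ^ d),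
    ← ENNReal.toReal_mul]
  exact ENNReal.toReal_mono (ENNReal.mul_ne_top ENNReal.ofReal_ne_top measure_ball_lt_top.ne)
    (L.hausdorffMeasure_ball_inter_le hL q hR)

end AffineSubspace

namespace EuclideanGeometry

theorem orthogonalProjection_sub_orthogonalProjection (L : AffineSubspace ℝ E) [Nonempty L]
    (y z : E) :
    (orthogonalProjection L y : E) - orthogonalProjection L z =
      L.direction.starProjection (y - z) := by
  have h := congrArg ((↑) : L.direction → E)
    ((orthogonalProjection L : E →ᵃ[ℝ] L).linearMap_vsub y z)
  simpa [eq_comm] using h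

theorem lipschitzWith_orthogonalProjection (L : AffineSubspace ℝ E) [Nonempty L] :
    LipschitzWith 1 fun y ↦ (orthogonalProjection L y : E) :=
  LipschitzWith.of_dist_le_mul fun y z ↦ by
    simpa [dist_eq_norm, orthogonalProjection_sub_orthogonalProjection] using
      L.direction.norm_starProjection_apply_le (y - z)

theorem dist_orthogonalProjection_le_hausdorffDist {s t : Set E} {L : AffineSubspace ℝ E}
    [Nonempty L] (ht : t ⊆ L) (ht₀ : t.Nonempty) (hst : hausdorffEDist s t ≠ ⊤) {y : E}
    (hy : y ∈ s) : dist y (orthogonalProjection L y) ≤ hausdorffDist s t := by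
  rw [dist_orthogonalProjection_eq_infDist]
  exact (infDist_le_infDist_of_subset ht ht₀).trans (infDist_le_hausdorffDist_of_mem hy hst)

variable {L₁ L₂ : AffineSubspace ℝ E} [Nonempty L₂]

theorem norm_starProjection_sub_le {p : E} (hp : p ∈ L₁) {ρ δ : ℝ} (hρ : 0 < ρ)
    (hclose : ∀ y ∈ L₁, dist y p ≤ ρ → dist y (orthogonalProjection L₂ y) ≤ δ) {w : E}
    (hw : w ∈ L₁.direction) : ‖L₂.direction.starProjection w - w‖ ≤ 2 * δ / ρ * ‖w‖ := by
  refine L₁.direction.norm_apply_le_of_forall_norm_eq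
    (L₂.direction.starProjection.toLinearMap - LinearMap.id) hρ (fun u hu hnorm ↦ ?_) hw
  have hup : u + p ∈ L₁ := AffineSubspace.vadd_mem_of_mem_direction hu hp
  have key : L₂.direction.starProjection u - u =
      (p - orthogonalProjection L₂ p) - (u + p - orthogonalProjection L₂ (u + p)) := by
    have h := orthogonalProjection_sub_orthogonalProjection L₂ (u + p) p
    rw [add_sub_cancel_right] at h
    rw [← h]
    abel
  simp only [LinearMap.sub_apply, ContinuousLinearMap.coe_coe, LinearMap.id_apply, key]
  refine (norm_sub_le _ _).trans ?_
  rw [← dist_eq_norm, ← dist_eq_norm]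
  linarith [hclose p hp (by simp [hρ.le]), hclose (u + p) hup (by simp [hnorm])]

theorem dist_orthogonalProjection_le_add {p : E} (hp : p ∈ L₁) {ε : ℝ}
    (htilt : ∀ w ∈ L₁.direction, ‖L₂.direction.starProjection w - w‖ ≤ ε * ‖w‖) {y : E}
    (hy : y ∈ L₁) :
    dist y (orthogonalProjection L₂ y) ≤ dist p (orthogonalProjection L₂ p) + ε * dist y p := by
  have key : y - orthogonalProjection L₂ y =
      (p - orthogonalProjection L₂ p) - (L₂.direction.starProjection (y - p) - (y - p)) := by
    rw [← orthogonalProjection_sub_orthogonalProjection]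
    abel
  rw [dist_eq_norm, dist_eq_norm, dist_eq_norm, key]
  exact (norm_sub_le _ _).trans
    (by gcongr; exact htilt _ (AffineSubspace.vsub_mem_direction hy hp))

theorem one_sub_mul_dist_le_dist_orthogonalProjection {ε : ℝ}
    (htilt : ∀ w ∈ L₁.direction, ‖L₂.direction.starProjection w - w‖ ≤ ε * ‖w‖) {y z : E}
    (hy : y ∈ L₁) (hz : z ∈ L₁) :
    (1 - ε) * dist y z ≤
      dist (orthogonalProjection L₂ y : E) (orthogonalProjection L₂ z : E) := by
  rw [dist_eq_norm, dist_eq_norm, orthogonalProjection_sub_orthogonalProjection]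
  have h := htilt _ (AffineSubspace.vsub_mem_direction hy hz)
  rw [vsub_eq_sub, norm_sub_rev] at h
  linarith [norm_sub_norm_le (y - z) (L₂.direction.starProjection (y - z))]

theorem surjOn_orthogonalProjection
    (hrank : Module.finrank ℝ L₁.direction = Module.finrank ℝ L₂.direction) {ε : ℝ} (hε : ε < 1)
    (htilt : ∀ w ∈ L₁.direction, ‖L₂.direction.starProjection w - w‖ ≤ ε * ‖w‖) {p : E}
    (hp : p ∈ L₁) : SurjOn (fun y ↦ (orthogonalProjection L₂ y : E)) L₁ L₂ := by
  let T : L₁.direction →ₗ[ℝ] L₂.direction :=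
    L₂.direction.orthogonalProjectionOnto.toLinearMap ∘ₗ L₁.direction.subtype
  have hT : Function.Surjective T := by
    refine (LinearMap.injective_iff_surjective_of_finrank_eq_finrank hrank).1
      ((injective_iff_map_eq_zero T).2 fun w hw ↦ ?_)
    have h := htilt w w.2
    rw [← Submodule.coe_orthogonalProjectionOnto_apply] at h
    simp only [T, LinearMap.comp_apply, Submodule.subtype_apply, ContinuousLinearMap.coe_coe] at hw
    rw [hw, Submodule.coe_zero, zero_sub, norm_neg] at h
    have : ‖(w : E)‖ = 0 := by nlinarith [norm_nonneg (w : E)]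
    exact Subtype.ext (norm_eq_zero.1 this)
  intro q hq
  obtain ⟨w, hw⟩ := hT ⟨q - orthogonalProjection L₂ p,
    AffineSubspace.vsub_mem_direction hq (orthogonalProjection_mem p)⟩
  refine ⟨w + p, AffineSubspace.vadd_mem_of_mem_direction w.2 hp, ?_⟩
  have h := orthogonalProjection_sub_orthogonalProjection L₂ (w + p) p
  rw [add_sub_cancel_right, ← Submodule.coe_orthogonalProjectionOnto_apply] at h
  have hw' := congrArg Subtype.val hw
  simp only [T, LinearMap.comp_apply, Submodule.subtype_apply, ContinuousLinearMap.coe_coe] at hw'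
  exact sub_left_inj.1 (h.trans hw')

variable {x p₁ : E} {r δ : ℝ}

theorem dist_orthogonalProjection_le_of_hausdorffDist_le
    (hne₂ : ((L₂ : Set E) ∩ ball x r).Nonempty)
    (hδ : hausdorffDist ((L₁ : Set E) ∩ ball x r) (L₂ ∩ ball x r) ≤ δ) {y : E} (hy : y ∈ L₁)
    (hyx : y ∈ ball x r) : dist y (orthogonalProjection L₂ y) ≤ δ :=
  (dist_orthogonalProjection_le_hausdorffDist inter_subset_left hne₂
    (hausdorffEDist_ne_top_of_nonempty_of_bounded (show ((L₁ : Set E) ∩ ball x r).Nonempty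
      from ⟨y, hy, hyx⟩) hne₂
      (isBounded_ball.subset inter_subset_right) (isBounded_ball.subset inter_subset_right))
    ⟨hy, hyx⟩).trans hδ

theorem norm_starProjection_sub_le_of_hausdorffDist_le (hr : 0 < r) (hp₁ : p₁ ∈ L₁)
    (hp₁x : p₁ ∈ ball x (r / 2)) (hne₂ : ((L₂ : Set E) ∩ ball x r).Nonempty)
    (hδ : hausdorffDist ((L₁ : Set E) ∩ ball x r) (L₂ ∩ ball x r) ≤ δ) {w : E}
    (hw : w ∈ L₁.direction) : ‖L₂.direction.starProjection w - w‖ ≤ 4 * δ / r * ‖w‖ := by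
  have h := norm_starProjection_sub_le hp₁ (half_pos hr) (fun y hy hyp ↦
    dist_orthogonalProjection_le_of_hausdorffDist_le hne₂ hδ hy
      (mem_ball.2 (by linarith [dist_triangle y p₁ x, mem_ball.1 hp₁x]))) hw
  rwa [show 2 * δ / (r / 2) = 4 * δ / r by ring] at h

end EuclideanGeometry

section Estimates

open EuclideanGeometry

variable [MeasurableSpace E] [BorelSpace E] [Nontrivial E] {L₁ L₂ : AffineSubspace ℝ E} {d : ℕ}
  {x p₁ : E} {r δ : ℝ} {φ : E → ℝ}

theorem abs_integral_comp_orthogonalProjection_sub_le [Nonempty L₂]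
    (h₁ : Module.finrank ℝ L₁.direction = d) (hr : 0 < r) (hp₁ : p₁ ∈ L₁)
    (hp₁x : p₁ ∈ ball x (r / 2)) (hne₂ : ((L₂ : Set E) ∩ ball x r).Nonempty)
    (hδ : hausdorffDist ((L₁ : Set E) ∩ ball x r) (L₂ ∩ ball x r) ≤ δ) (hδr : δ ≤ r / 8)
    (hφ : LipschitzWith 1 φ) (hφs : Function.support φ ⊆ ball x r) :
    |∫ y, φ (orthogonalProjection L₂ y) ∂μH[(d : ℝ)].restrict L₁ -
        ∫ y, φ y ∂μH[(d : ℝ)].restrict L₁| ≤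
      19 * δ * (μH[(d : ℝ)].restrict L₁).real (ball x (4 * r)) := by
  have hδ₀ : 0 ≤ δ := hausdorffDist_nonneg.trans hδ
  have hε : 4 * δ / r ≤ 1 / 2 := by rw [div_le_iff₀ hr]; linarith
  have hp₁δ := dist_orthogonalProjection_le_of_hausdorffDist_le hne₂ hδ hp₁
    (ball_subset_ball (by linarith) hp₁x)
  have hmove (y : E) (hy : y ∈ L₁) :
      dist y (orthogonalProjection L₂ y) ≤ δ + 4 * δ / r * dist y p₁ :=
    (dist_orthogonalProjection_le_add hp₁
      (fun w hw ↦ norm_starProjection_sub_le_of_hausdorffDist_le hr hp₁ hp₁x hne₂ hδ hw) hy).trans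
      (by gcongr)
  have hL₁ : MeasurableSet (L₁ : Set E) := L₁.closed_of_finiteDimensional.measurableSet
  refine abs_integral_comp_sub_integral_le hφ hφs
    (hφ.abs_le_of_support_subset_ball hr.le hφs) (ball_subset_ball (by linarith))
    (L₁.restrict_hausdorffMeasure_ball_ne_top h₁ x (by positivity))
    (lipschitzWith_orthogonalProjection L₂).continuous.measurable
    (ae_restrict_of_forall_mem hL₁ fun y hy hπy ↦ ?_)
    (ae_restrict_of_forall_mem hL₁ fun y hy hyx ↦ ?_)
  · have hεy := mul_le_mul_of_nonneg_right hε (dist_nonneg (x := y) (y := p₁))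
    rw [mem_ball] at hπy ⊢
    linarith [hmove y hy, dist_triangle y p₁ x, dist_triangle4 y (orthogonalProjection L₂ y) x p₁,
      dist_comm x p₁, mem_ball.1 hp₁x]
  · have hyp : dist y p₁ ≤ 9 * r / 2 := by
      linarith [dist_triangle y x p₁, mem_ball.1 hyx, dist_comm x p₁, mem_ball.1 hp₁x]
    calc dist (orthogonalProjection L₂ y : E) y ≤ δ + 4 * δ / r * (9 * r / 2) := by
          rw [dist_comm]
          exact (hmove y hy).trans (by gcongr)
      _ = 19 * δ := by field_simp; ring

theorem abs_integral_map_orthogonalProjection_sub_le [Nonempty L₂]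
    (h₁ : Module.finrank ℝ L₁.direction = d) (h₂ : Module.finrank ℝ L₂.direction = d)
    (hr : 0 < r) (hp₁ : p₁ ∈ L₁) (hp₁x : p₁ ∈ ball x (r / 2))
    (hne₂ : ((L₂ : Set E) ∩ ball x r).Nonempty)
    (hδ : hausdorffDist ((L₁ : Set E) ∩ ball x r) (L₂ ∩ ball x r) ≤ δ) (hδr : δ ≤ r / 8)
    (hφ : LipschitzWith 1 φ) (hφs : Function.support φ ⊆ ball x r) :
    |∫ y, φ y ∂(μH[(d : ℝ)].restrict L₁).map (fun y ↦ (orthogonalProjection L₂ y : E)) -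
        ∫ y, φ y ∂μH[(d : ℝ)].restrict L₂| ≤
      2 * r * ((1 - 4 * δ / r)⁻¹ ^ d - 1) * (μH[(d : ℝ)].restrict L₂).real (ball x r) := by
  set ε := 4 * δ / r
  have hε : ε < 1 := by rw [div_lt_one hr]; linarith
  have htilt (w : E) (hw : w ∈ L₁.direction) :=
    norm_starProjection_sub_le_of_hausdorffDist_le hr hp₁ hp₁x hne₂ hδ hw
  have hπ := lipschitzWith_orthogonalProjection L₂
  set K : ℝ≥0 := (Real.toNNReal (1 - ε))⁻¹
  have hK : (K : ℝ) = (1 - ε)⁻¹ := by simp [K, Real.coe_toNNReal _ (by linarith : 0 ≤ 1 - ε)]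
  have hlo := restrict_hausdorffMeasure_le_map hπ.continuous.measurable hπ.lipschitzOnWith
    (surjOn_orthogonalProjection (h₁.trans h₂.symm) hε htilt hp₁) d.cast_nonneg
  have hhi := map_restrict_hausdorffMeasure_le (K := K) hπ.continuous.measurable
    (fun y _ ↦ orthogonalProjection_mem y) (fun y hy z hz ↦ by
      rw [hK, inv_mul_eq_div, le_div_iff₀ (by linarith)]
      linarith [one_sub_mul_dist_le_dist_orthogonalProjection htilt hy hz]) d.cast_nonneg
  have hμ₂ := L₂.restrict_hausdorffMeasure_ball_ne_top h₂ x hr.le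
  have hνB := Measure.le_iff'.1 hhi (ball x r)
  rw [Measure.smul_apply, smul_eq_mul, ENNReal.rpow_natCast, ← ENNReal.coe_pow] at hνB
  have hνB' := ne_top_of_le_ne_top (ENNReal.mul_ne_top ENNReal.coe_ne_top hμ₂) hνB
  refine (abs_integral_sub_le_of_le hlo hνB' hφ.continuous.measurable hφs
    (hφ.abs_le_of_support_subset_ball hr.le hφs)).trans ?_
  have := ENNReal.toReal_mono (ENNReal.mul_ne_top ENNReal.coe_ne_top hμ₂) hνB
  rw [ENNReal.toReal_mul, ENNReal.coe_toReal, NNReal.coe_pow, hK] at this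
  rw [mul_assoc (2 * r)]
  refine mul_le_mul_of_nonneg_left ?_ (by positivity)
  rw [sub_mul, one_mul]
  exact sub_le_sub_right this _

theorem abs_integral_sub_le_of_hausdorffDist_le [Nonempty L₂]
    (h₁ : Module.finrank ℝ L₁.direction = d) (h₂ : Module.finrank ℝ L₂.direction = d)
    (hr : 0 < r) (hp₁ : p₁ ∈ L₁) (hp₁x : p₁ ∈ ball x (r / 2))
    (hne₂ : ((L₂ : Set E) ∩ ball x r).Nonempty)
    (hδ : hausdorffDist ((L₁ : Set E) ∩ ball x r) (L₂ ∩ ball x r) ≤ δ) (hδr : δ ≤ r / 8)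
    (hφ : LipschitzWith 1 φ) (hφs : Function.support φ ⊆ ball x r) :
    |∫ y, φ y ∂μH[(d : ℝ)].restrict L₁ - ∫ y, φ y ∂μH[(d : ℝ)].restrict L₂| ≤
      (19 * 8 ^ d + 8 * d * 4 ^ d) * unitBallMass d * δ * r ^ d := by
  have hδ₀ : 0 ≤ δ := hausdorffDist_nonneg.trans hδ
  have hcomp := abs_integral_comp_orthogonalProjection_sub_le h₁ hr hp₁ hp₁x hne₂ hδ hδr hφ hφs
  have hmap := abs_integral_map_orthogonalProjection_sub_le h₁ h₂ hr hp₁ hp₁x hne₂ hδ hδr hφ hφs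
  rw [integral_map (lipschitzWith_orthogonalProjection L₂).continuous.aemeasurable
    hφ.continuous.aestronglyMeasurable] at hmap
  have hm₁ := L₁.restrict_hausdorffMeasure_real_ball_le h₁ x (by positivity : 0 ≤ 4 * r)
  have hm₂ := L₂.restrict_hausdorffMeasure_real_ball_le h₂ x hr.le
  have hK := inv_one_sub_pow_sub_one_le d (by positivity : 0 ≤ 4 * δ / r)
    (by rw [div_le_iff₀ hr]; linarith)
  calc _ ≤ |∫ y, φ (orthogonalProjection L₂ y) ∂μH[(d : ℝ)].restrict L₁ -
          ∫ y, φ y ∂μH[(d : ℝ)].restrict L₁| +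
        |∫ y, φ (orthogonalProjection L₂ y) ∂μH[(d : ℝ)].restrict L₁ -
          ∫ y, φ y ∂μH[(d : ℝ)].restrict L₂| := by
        rw [abs_sub_comm (∫ y, φ (orthogonalProjection L₂ y) ∂μH[(d : ℝ)].restrict L₁)]
        exact abs_sub_le _ _ _
    _ ≤ 19 * δ * (unitBallMass d * (2 * (4 * r)) ^ d) +
        2 * r * (d * 2 ^ d * (4 * δ / r)) * (unitBallMass d * (2 * r) ^ d) := by
        gcongr
        · exact hcomp.trans (by gcongr)
        · exact hmap.trans (by gcongr)
    _ = _ := by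
        rw [show 2 * (4 * r) = 8 * r by ring, mul_pow, mul_pow, show (4 : ℝ) ^ d = 2 ^ d * 2 ^ d by
          rw [← mul_pow]; norm_num]
        field_simp
        ring

theorem abs_integral_le_of_support_subset_ball (L : AffineSubspace ℝ E)
    (hL : Module.finrank ℝ L.direction = d) (hr : 0 ≤ r) (hφ : LipschitzWith 1 φ)
    (hφs : Function.support φ ⊆ ball x r) :
    |∫ y, φ y ∂μH[(d : ℝ)].restrict L| ≤ 2 * r * (unitBallMass d * (2 * r) ^ d) :=
  (abs_integral_le_of_ae_compl_eq_zero (L.restrict_hausdorffMeasure_ball_ne_top hL x hr)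
    (ae_of_all _ fun y ↦ Function.support_subset_iff'.1 hφs y)
    (ae_of_all _ fun y _ ↦ hφ.abs_le_of_support_subset_ball hr hφs y)).trans
    (by gcongr; exact L.restrict_hausdorffMeasure_real_ball_le hL x hr)

theorem abs_integral_sub_le_of_lt_eight_mul (h₁ : Module.finrank ℝ L₁.direction = d)
    (h₂ : Module.finrank ℝ L₂.direction = d) (hr : 0 < r) (hδr : r < 8 * δ)
    (hφ : LipschitzWith 1 φ) (hφs : Function.support φ ⊆ ball x r) :
    |∫ y, φ y ∂μH[(d : ℝ)].restrict L₁ - ∫ y, φ y ∂μH[(d : ℝ)].restrict L₂| ≤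
      32 * 2 ^ d * unitBallMass d * δ * r ^ d := by
  have hΛ := unitBallMass_pos d
  calc _ ≤ 2 * r * (unitBallMass d * (2 * r) ^ d) + 2 * r * (unitBallMass d * (2 * r) ^ d) :=
        (abs_sub _ _).trans (add_le_add
          (abs_integral_le_of_support_subset_ball L₁ h₁ hr.le hφ hφs)
          (abs_integral_le_of_support_subset_ball L₂ h₂ hr.le hφ hφs))
    _ = 4 * 2 ^ d * unitBallMass d * r * r ^ d := by rw [mul_pow]; ring
    _ ≤ 4 * 2 ^ d * unitBallMass d * (8 * δ) * r ^ d := by gcongr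
    _ = _ := by ring

noncomputable def fdistConst (d : ℕ) : ℝ :=
  (32 * 2 ^ d + 19 * 8 ^ d + 8 * d * 4 ^ d) * unitBallMass d

theorem fdistConst_pos (d : ℕ) : 0 < fdistConst d :=
  mul_pos (by positivity) (unitBallMass_pos d)

theorem abs_integral_sub_le_fdistConst_mul (h₁ : Module.finrank ℝ L₁.direction = d)
    (h₂ : Module.finrank ℝ L₂.direction = d) (hr : 0 < r)
    (hne₁ : ((L₁ : Set E) ∩ ball x (r / 2)).Nonempty)
    (hne₂ : ((L₂ : Set E) ∩ ball x (r / 2)).Nonempty) (hφ : LipschitzWith 1 φ)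
    (hφs : Function.support φ ⊆ ball x r) :
    |∫ y, φ y ∂μH[(d : ℝ)].restrict L₁ - ∫ y, φ y ∂μH[(d : ℝ)].restrict L₂| ≤
      fdistConst d * hausdorffDist ((L₁ : Set E) ∩ ball x r) (L₂ ∩ ball x r) * r ^ d := by
  set δ := hausdorffDist ((L₁ : Set E) ∩ ball x r) (L₂ ∩ ball x r)
  have hδ₀ : 0 ≤ δ := hausdorffDist_nonneg
  have hΛ := unitBallMass_pos d
  obtain ⟨p₁, hp₁, hp₁x⟩ := hne₁
  obtain ⟨p₂, hp₂, hp₂x⟩ := hne₂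
  have : Nonempty L₂ := ⟨⟨p₂, hp₂⟩⟩
  rcases le_or_gt δ (r / 8) with hδr | hδr
  · refine (abs_integral_sub_le_of_hausdorffDist_le h₁ h₂ hr hp₁ hp₁x
      ⟨p₂, hp₂, ball_subset_ball (by linarith) hp₂x⟩ le_rfl hδr hφ hφs).trans ?_
    rw [fdistConst]
    gcongr
    linarith [(by positivity : (0 : ℝ) ≤ 32 * 2 ^ d)]
  · refine (abs_integral_sub_le_of_lt_eight_mul (δ := δ) h₁ h₂ hr (by linarith) hφ hφs).trans ?_
    rw [fdistConst]
    gcongr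
    linarith [(by positivity : (0 : ℝ) ≤ 19 * 8 ^ d + 8 * d * 4 ^ d)]

end Estimates

end InnerProductSpace

/-- for affine `d`-planes `L₁, L₂` meeting `0.5B`,
`r^{-d} F_B(ℋ^d|_{L₁}, ℋ^d|_{L₂}) ≤ C dist_H(L₁ ∩ B, L₂ ∩ B)`, `C = C(n,d)`. -/
theorem Fdist_le_hausdorffDist (n d : ℕ) :
    ∃ C : ℝ, 0 < C ∧
      ∀ (x : EuclideanSpace ℝ (Fin n)) (r : ℝ), 0 < r →
      ∀ (L₁ L₂ : AffineSubspace ℝ (EuclideanSpace ℝ (Fin n))),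
        Module.finrank ℝ L₁.direction = d → Module.finrank ℝ L₂.direction = d →
        ((L₁ : Set (EuclideanSpace ℝ (Fin n))) ∩ ball x (r / 2)).Nonempty →
        ((L₂ : Set (EuclideanSpace ℝ (Fin n))) ∩ ball x (r / 2)).Nonempty →
        (1 / r ^ d) * Fdist (ball x r)
            (μH[(d : ℝ)].restrict (L₁ : Set (EuclideanSpace ℝ (Fin n))))
            (μH[(d : ℝ)].restrict (L₂ : Set (EuclideanSpace ℝ (Fin n))))
            (fun _ => 1) (fun _ => 1) ≤
          C * hausdorffDist ((L₁ : Set (EuclideanSpace ℝ (Fin n))) ∩ ball x r)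
            ((L₂ : Set (EuclideanSpace ℝ (Fin n))) ∩ ball x r) := by
  refine ⟨fdistConst d, fdistConst_pos d, fun x r hr L₁ L₂ h₁ h₂ hne₁ hne₂ ↦ ?_⟩
  rw [one_div, inv_mul_le_iff₀ (by positivity)]
  have hC : 0 ≤ r ^ d * (fdistConst d * hausdorffDist ((L₁ : Set (EuclideanSpace ℝ (Fin n))) ∩
      ball x r) ((L₂ : Set (EuclideanSpace ℝ (Fin n))) ∩ ball x r)) :=
    mul_nonneg (by positivity) (mul_nonneg (fdistConst_pos d).le hausdorffDist_nonneg)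
  refine Real.iSup_le (fun φ ↦ ?_) hC
  simp only [mul_one]
  rcases subsingleton_or_nontrivial (EuclideanSpace ℝ (Fin n)) with _ | _
  · have hL : (L₁ : Set (EuclideanSpace ℝ (Fin n))) = L₂ :=
      (hne₁.mono inter_subset_left).eq_univ.trans (hne₂.mono inter_subset_left).eq_univ.symm
    exact (abs_eq_zero.2 (sub_eq_zero.2 (by rw [hL]))).trans_le hC
  · exact (abs_integral_sub_le_fdistConst_mul h₁ h₂ hr hne₁ hne₂ φ.2.1 φ.2.2).trans_eq (by ring)
end

section
/- Let $\sigma$ be a $d$-Ahlfors regular measure on $\mathbb{R}^n$ and let $s_r(x,y) = \phi_r(x-y)/(\phi_r*\sigma(x))$ with $\phi_r$ as above. Then for $x, x', y \in \operatorname{supp}\sigma$: $|s_r(x,y) - s_r(x',y)| \le C\,|x-x'|\,r^{-d-1}$, with $C$ depending only on the Ahlfors regularity constant, $d$, and $\phi$. -/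
open MeasureTheory Metric Set

noncomputable def alphaNum (n d : ℕ) (μ : Measure (EuclideanSpace ℝ (Fin n)))
    (f : EuclideanSpace ℝ (Fin n) → ℝ) (x : EuclideanSpace ℝ (Fin n)) (r : ℝ) : ℝ :=
  (1 / r ^ (d + 1)) *
    ⨅ p : ℝ × {L : AffineSubspace ℝ (EuclideanSpace ℝ (Fin n)) //
        Module.finrank ℝ L.direction = d},
      Fdist (ball x r) μ (μH[(d : ℝ)].restrict (p.2.1 : Set (EuclideanSpace ℝ (Fin n))))
        f (fun _ => p.1)

/-- The support of a measure: points all of whose neighbourhoods have positive measure. -/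
def msupport {n : ℕ} (μ : Measure (EuclideanSpace ℝ (Fin n))) : Set (EuclideanSpace ℝ (Fin n)) :=
  {x | ∀ r : ℝ, 0 < r → 0 < μ (ball x r)}

/-- `μ` is `d`-Ahlfors regular with constant `A`. -/
def AhlforsRegular (n d : ℕ) (A : ℝ) (μ : Measure (EuclideanSpace ℝ (Fin n))) : Prop :=
  ∀ x ∈ msupport μ, ∀ s : ℝ, 0 < s → ENNReal.ofReal s < EMetric.diam (msupport μ) →
    ENNReal.ofReal (A⁻¹ * s ^ d) ≤ μ (ball x s) ∧ μ (ball x s) ≤ ENNReal.ofReal (A * s ^ d)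

/-- The convolution `φ_r * σ` where `φ_r(y) = r^{-d} φ(y/r)`. -/
noncomputable def phiConv {n : ℕ} (d : ℕ) (σ : Measure (EuclideanSpace ℝ (Fin n)))
    (φ : EuclideanSpace ℝ (Fin n) → ℝ) (r : ℝ) (x : EuclideanSpace ℝ (Fin n)) : ℝ :=
  ∫ y, r ^ (-(d : ℝ)) * φ (r⁻¹ • (x - y)) ∂σ

/-- The kernel `s_r(x,y) = φ_r(x-y) / (φ_r*σ)(x)`. -/
noncomputable def sKer {n : ℕ} (d : ℕ) (σ : Measure (EuclideanSpace ℝ (Fin n)))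
    (φ : EuclideanSpace ℝ (Fin n) → ℝ) (r : ℝ) (x y : EuclideanSpace ℝ (Fin n)) : ℝ :=
  r ^ (-(d : ℝ)) * φ (r⁻¹ • (x - y)) / phiConv d σ φ r x

/-!
The numerator `φ_r(x - y)` is `r^{-d-1}`-Lipschitz in `x` and bounded by `Mφ r^{-d}`. The
denominator `φ_r * σ(x)` is bounded below by `c₀ / (A 2^d)`, since `φ_r ≥ c₀ r^{-d}` on
`B(x, r/2)`, a ball of mass at least `A⁻¹ (r/2)^d`; and it is `2A/r`-Lipschitz on `supp σ`,
because the difference of the integrands is at most `r^{-d-1} |x - x'|` and is carried by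
`B(x, r) ∪ B(x', r)`, of mass at most `2 A r^d`. The estimate
`|a/b - a'/b'| ≤ |a - a'|/b + |a'| |b - b'|/(b b')` combines the three bounds.
-/

lemma abs_div_sub_div_le {a a' b b' c ε δ m : ℝ} (ha : |a - a'| ≤ ε) (ha' : |a'| ≤ m)
    (hb : |b - b'| ≤ δ) (hc : 0 < c) (hcb : c ≤ b) (hcb' : c ≤ b') :
    |a / b - a' / b'| ≤ ε / c + m * δ / c ^ 2 := by
  have hb₀ : 0 < b := hc.trans_le hcb
  have hb₀' : 0 < b' := hc.trans_le hcb'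
  have hsplit : a / b - a' / b' = (a - a') / b + a' * (b' - b) / (b * b') := by
    field_simp
    ring
  have hε : 0 ≤ ε := (abs_nonneg _).trans ha
  have hm : 0 ≤ m := (abs_nonneg _).trans ha'
  have hδ : 0 ≤ δ := (abs_nonneg _).trans hb
  rw [hsplit, sq]
  refine (abs_add_le _ _).trans (add_le_add ?_ ?_)
  · rw [abs_div, abs_of_pos hb₀]
    exact div_le_div₀ hε ha hc hcb
  · rw [abs_div, abs_mul, abs_of_pos (mul_pos hb₀ hb₀'), abs_sub_comm]
    exact div_le_div₀ (mul_nonneg hm hδ) (mul_le_mul ha' hb (abs_nonneg _) hm)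
      (mul_pos hc hc) (mul_le_mul hcb hcb' hc.le hb₀.le)

section ScaledBump

variable {E : Type*} [NormedAddCommGroup E] [NormedSpace ℝ E] {d : ℕ} {φ : E → ℝ} {r : ℝ}

noncomputable def scaledBump (d : ℕ) (φ : E → ℝ) (r : ℝ) (v : E) : ℝ :=
  r ^ (-(d : ℝ)) * φ (r⁻¹ • v)

lemma scaledBump_nonneg (hφ : ∀ v, 0 ≤ φ v) (hr : 0 ≤ r) (v : E) : 0 ≤ scaledBump d φ r v :=
  mul_nonneg (Real.rpow_nonneg hr _) (hφ _)

lemma scaledBump_le {M : ℝ} (hφ : ∀ v, φ v ≤ M) (hr : 0 ≤ r) (v : E) :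
    scaledBump d φ r v ≤ M * r ^ (-(d : ℝ)) := by
  rw [scaledBump, mul_comm M]
  exact mul_le_mul_of_nonneg_left (hφ _) (Real.rpow_nonneg hr _)

lemma continuous_scaledBump (hφ : Continuous φ) : Continuous (scaledBump d φ r) := by
  unfold scaledBump
  fun_prop

lemma abs_scaledBump_sub_le (hφ : LipschitzWith 1 φ) (hr : 0 < r) (v w : E) :
    |scaledBump d φ r v - scaledBump d φ r w| ≤ r ^ (-(d : ℝ) - 1) * dist v w := by
  have hφvw : |φ (r⁻¹ • v) - φ (r⁻¹ • w)| ≤ r⁻¹ * dist v w := by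
    have h := hφ.dist_le_mul (r⁻¹ • v) (r⁻¹ • w)
    rwa [NNReal.coe_one, one_mul, dist_smul₀, Real.norm_of_nonneg (inv_nonneg.2 hr.le),
      Real.dist_eq] at h
  rw [scaledBump, scaledBump, ← mul_sub, abs_mul, abs_of_nonneg (Real.rpow_nonneg hr.le _),
    Real.rpow_sub_one hr.ne', div_eq_mul_inv, mul_assoc]
  exact mul_le_mul_of_nonneg_left hφvw (Real.rpow_nonneg hr.le _)

lemma scaledBump_sub_eq_zero (hφ : Function.support φ ⊆ ball 0 1) (hr : 0 < r) {x y : E}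
    (hy : y ∉ ball x r) : scaledBump d φ r (x - y) = 0 := by
  have hout : r⁻¹ • (x - y) ∉ ball (0 : E) 1 := by
    rw [mem_ball, not_lt, dist_comm] at hy
    rw [mem_ball_zero_iff, norm_smul, norm_inv, Real.norm_of_nonneg hr.le, ← dist_eq_norm,
      inv_mul_lt_iff₀ hr, mul_one, not_lt]
    exact hy
  rw [scaledBump, Function.notMem_support.1 (fun h => hout (hφ h)), mul_zero]

lemma le_scaledBump_sub {c : ℝ} (hφ : ∀ v ∈ ball (0 : E) (1 / 2), c ≤ φ v) (hr : 0 < r)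
    {x y : E} (hy : y ∈ ball x (r / 2)) : c * r ^ (-(d : ℝ)) ≤ scaledBump d φ r (x - y) := by
  have hin : r⁻¹ • (x - y) ∈ ball (0 : E) (1 / 2) := by
    rw [mem_ball, dist_comm] at hy
    rw [mem_ball_zero_iff, norm_smul, norm_inv, Real.norm_of_nonneg hr.le, ← dist_eq_norm,
      inv_mul_lt_iff₀ hr]
    linarith
  rw [scaledBump, mul_comm c]
  exact mul_le_mul_of_nonneg_left (hφ _ hin) (Real.rpow_nonneg hr.le _)

end ScaledBump

section Convolution

variable {n d : ℕ} {σ : Measure (EuclideanSpace ℝ (Fin n))} {φ : EuclideanSpace ℝ (Fin n) → ℝ}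
  {r M : ℝ} {x x' : EuclideanSpace ℝ (Fin n)}

lemma phiConv_eq_integral_scaledBump :
    phiConv d σ φ r x = ∫ y, scaledBump d φ r (x - y) ∂σ := rfl

lemma sKer_eq_scaledBump_div (y : EuclideanSpace ℝ (Fin n)) :
    sKer d σ φ r x y = scaledBump d φ r (x - y) / phiConv d σ φ r x := rfl

lemma integrable_scaledBump_sub (hφ : LipschitzWith 1 φ) (hφ₀ : ∀ v, 0 ≤ φ v)
    (hφM : ∀ v, φ v ≤ M) (hsupp : Function.support φ ⊆ ball 0 1) (hr : 0 < r)
    (hx : σ (ball x r) < ⊤) : Integrable (fun y => scaledBump d φ r (x - y)) σ := by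
  have hcont : Continuous fun y => scaledBump d φ r (x - y) :=
    (continuous_scaledBump hφ.continuous).comp (by fun_prop)
  refine (integrableOn_iff_integrable_of_support_subset fun y hy => ?_).1
    (Measure.integrableOn_of_bounded (M := M * r ^ (-(d : ℝ))) hx.ne
      hcont.aestronglyMeasurable (ae_of_all _ fun y => ?_))
  · by_contra hy'
    exact hy (scaledBump_sub_eq_zero hsupp hr hy')
  · rw [Real.norm_of_nonneg (scaledBump_nonneg hφ₀ hr.le _)]
    exact scaledBump_le hφM hr.le _

lemma mul_measureReal_le_phiConv {c : ℝ} (hφ : LipschitzWith 1 φ) (hφ₀ : ∀ v, 0 ≤ φ v)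
    (hφM : ∀ v, φ v ≤ M) (hsupp : Function.support φ ⊆ ball 0 1)
    (hφc : ∀ v ∈ ball (0 : EuclideanSpace ℝ (Fin n)) (1 / 2), c ≤ φ v) (hr : 0 < r)
    (hx : σ (ball x r) < ⊤) :
    c * r ^ (-(d : ℝ)) * σ.real (ball x (r / 2)) ≤ phiConv d σ φ r x := by
  have hint := integrable_scaledBump_sub (d := d) hφ hφ₀ hφM hsupp hr hx
  have hhalf : σ (ball x (r / 2)) ≠ ⊤ :=
    (measure_mono (ball_subset_ball (by linarith))).trans_lt hx |>.ne
  calc c * r ^ (-(d : ℝ)) * σ.real (ball x (r / 2))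
      ≤ ∫ y in ball x (r / 2), scaledBump d φ r (x - y) ∂σ :=
        setIntegral_ge_of_const_le_real measurableSet_ball hhalf
          (fun y hy => le_scaledBump_sub hφc hr hy) hint.integrableOn
    _ ≤ phiConv d σ φ r x :=
        setIntegral_le_integral hint (ae_of_all _ fun y => scaledBump_nonneg hφ₀ hr.le _)

lemma abs_phiConv_sub_le_mul_measureReal (hφ : LipschitzWith 1 φ) (hφ₀ : ∀ v, 0 ≤ φ v)
    (hφM : ∀ v, φ v ≤ M) (hsupp : Function.support φ ⊆ ball 0 1) (hr : 0 < r)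
    (hx : σ (ball x r) < ⊤) (hx' : σ (ball x' r) < ⊤) :
    |phiConv d σ φ r x - phiConv d σ φ r x'| ≤
      r ^ (-(d : ℝ) - 1) * dist x x' * (σ.real (ball x r) + σ.real (ball x' r)) := by
  set U := ball x r ∪ ball x' r
  have hU : σ U < ⊤ := (measure_union_le _ _).trans_lt (ENNReal.add_lt_top.2 ⟨hx, hx'⟩)
  have hoff : ∀ y ∉ U, scaledBump d φ r (x - y) - scaledBump d φ r (x' - y) = 0 := by
    intro y hy
    rw [mem_union, not_or] at hy
    rw [scaledBump_sub_eq_zero hsupp hr hy.1, scaledBump_sub_eq_zero hsupp hr hy.2, sub_zero]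
  rw [phiConv_eq_integral_scaledBump, phiConv_eq_integral_scaledBump,
    ← integral_sub (integrable_scaledBump_sub hφ hφ₀ hφM hsupp hr hx)
      (integrable_scaledBump_sub hφ hφ₀ hφM hsupp hr hx'),
    ← setIntegral_eq_integral_of_forall_compl_eq_zero hoff, ← Real.norm_eq_abs]
  refine (norm_setIntegral_le_of_norm_le_const hU fun y _ => ?_).trans
    (mul_le_mul_of_nonneg_left (measureReal_union_le _ _) (by positivity))
  rw [Real.norm_eq_abs, ← dist_sub_right x x' y]
  exact abs_scaledBump_sub_le hφ hr _ _

end Convolution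

namespace AhlforsRegular

variable {n d : ℕ} {A : ℝ} {σ : Measure (EuclideanSpace ℝ (Fin n))}
  {x : EuclideanSpace ℝ (Fin n)} {s : ℝ}

lemma measure_ball_lt_top (hσ : AhlforsRegular n d A σ) (hx : x ∈ msupport σ) (hs : 0 < s)
    (hdiam : ENNReal.ofReal s < ediam (msupport σ)) : σ (ball x s) < ⊤ :=
  (hσ x hx s hs hdiam).2.trans_lt ENNReal.ofReal_lt_top

lemma measureReal_ball_le (hσ : AhlforsRegular n d A σ) (hA : 0 ≤ A) (hx : x ∈ msupport σ)
    (hs : 0 < s) (hdiam : ENNReal.ofReal s < ediam (msupport σ)) :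
    σ.real (ball x s) ≤ A * s ^ d :=
  ENNReal.toReal_le_of_le_ofReal (by positivity) (hσ x hx s hs hdiam).2

lemma le_measureReal_ball (hσ : AhlforsRegular n d A σ) (hx : x ∈ msupport σ) (hs : 0 < s)
    (hdiam : ENNReal.ofReal s < ediam (msupport σ)) :
    A⁻¹ * s ^ d ≤ σ.real (ball x s) :=
  (ENNReal.ofReal_le_iff_le_toReal (hσ.measure_ball_lt_top hx hs hdiam).ne).1
    (hσ x hx s hs hdiam).1

variable {φ : EuclideanSpace ℝ (Fin n) → ℝ} {r M : ℝ} {x' : EuclideanSpace ℝ (Fin n)}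

lemma le_phiConv {c : ℝ} (hσ : AhlforsRegular n d A σ) (hc : 0 ≤ c)
    (hφ : LipschitzWith 1 φ) (hφ₀ : ∀ v, 0 ≤ φ v) (hφM : ∀ v, φ v ≤ M)
    (hsupp : Function.support φ ⊆ ball 0 1)
    (hφc : ∀ v ∈ ball (0 : EuclideanSpace ℝ (Fin n)) (1 / 2), c ≤ φ v) (hr : 0 < r)
    (hdiam : ENNReal.ofReal r < ediam (msupport σ)) (hx : x ∈ msupport σ) :
    c / (A * 2 ^ d) ≤ phiConv d σ φ r x := by
  have hdiam₂ : ENNReal.ofReal (r / 2) < ediam (msupport σ) :=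
    (ENNReal.ofReal_le_ofReal (by linarith)).trans_lt hdiam
  have hrd : r ^ (-(d : ℝ)) * r ^ d = 1 := by
    rw [Real.rpow_neg hr.le, Real.rpow_natCast, inv_mul_cancel₀ (by positivity)]
  calc c / (A * 2 ^ d) = c / (A * 2 ^ d) * (r ^ (-(d : ℝ)) * r ^ d) := by rw [hrd, mul_one]
    _ = c * r ^ (-(d : ℝ)) * (A⁻¹ * (r / 2) ^ d) := by rw [div_pow]; ring
    _ ≤ c * r ^ (-(d : ℝ)) * σ.real (ball x (r / 2)) :=
        mul_le_mul_of_nonneg_left (hσ.le_measureReal_ball hx (by linarith) hdiam₂)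
          (by positivity)
    _ ≤ phiConv d σ φ r x :=
        mul_measureReal_le_phiConv hφ hφ₀ hφM hsupp hφc hr
          (hσ.measure_ball_lt_top hx hr hdiam)

lemma abs_phiConv_sub_le (hσ : AhlforsRegular n d A σ) (hA : 0 ≤ A)
    (hφ : LipschitzWith 1 φ) (hφ₀ : ∀ v, 0 ≤ φ v) (hφM : ∀ v, φ v ≤ M)
    (hsupp : Function.support φ ⊆ ball 0 1) (hr : 0 < r)
    (hdiam : ENNReal.ofReal r < ediam (msupport σ)) (hx : x ∈ msupport σ)
    (hx' : x' ∈ msupport σ) :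
    |phiConv d σ φ r x - phiConv d σ φ r x'| ≤ 2 * A * r⁻¹ * dist x x' := by
  have hrd : r ^ (-(d : ℝ) - 1) * r ^ d = r⁻¹ := by
    rw [Real.rpow_sub_one hr.ne', Real.rpow_neg hr.le, Real.rpow_natCast]
    field_simp
  calc |phiConv d σ φ r x - phiConv d σ φ r x'|
      ≤ r ^ (-(d : ℝ) - 1) * dist x x' * (σ.real (ball x r) + σ.real (ball x' r)) :=
        abs_phiConv_sub_le_mul_measureReal hφ hφ₀ hφM hsupp hr (hσ.measure_ball_lt_top hx hr hdiam)
          (hσ.measure_ball_lt_top hx' hr hdiam)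
    _ ≤ r ^ (-(d : ℝ) - 1) * dist x x' * (A * r ^ d + A * r ^ d) :=
        mul_le_mul_of_nonneg_left (add_le_add (hσ.measureReal_ball_le hA hx hr hdiam)
          (hσ.measureReal_ball_le hA hx' hr hdiam)) (by positivity)
    _ = 2 * A * r⁻¹ * dist x x' := by
        linear_combination 2 * A * dist x x' * hrd

end AhlforsRegular

/-- Lipschitz estimate for the kernel `s_r` in the first variable:
`|s_r(x,y) - s_r(x',y)| ≤ C |x-x'| r^{-d-1}` for `x, x', y ∈ supp σ`. -/
theorem sKer_lipschitz (n d : ℕ) (A c₀ Mφ : ℝ) (hA : 0 < A) (hc₀ : 0 < c₀) (hMφ : 0 < Mφ) :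
    ∃ C : ℝ, 0 < C ∧
      ∀ (σ : Measure (EuclideanSpace ℝ (Fin n))) (φ : EuclideanSpace ℝ (Fin n) → ℝ),
        AhlforsRegular n d A σ →
        LipschitzWith 1 φ → (∀ y, 0 ≤ φ y) →
        Function.support φ ⊆ ball (0 : EuclideanSpace ℝ (Fin n)) 1 →
        (∀ y ∈ ball (0 : EuclideanSpace ℝ (Fin n)) (1 / 2), c₀ ≤ φ y) →
        (∀ y, φ y ≤ Mφ) →
        ∀ r : ℝ, 0 < r → ENNReal.ofReal r < EMetric.diam (msupport σ) →
          ∀ x ∈ msupport σ, ∀ x' ∈ msupport σ, ∀ y ∈ msupport σ,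
            |sKer d σ φ r x y - sKer d σ φ r x' y| ≤ C * dist x x' * r ^ (-(d : ℝ) - 1) := by
  set c := c₀ / (A * 2 ^ d)
  have hc : 0 < c := by positivity
  refine ⟨c⁻¹ + 2 * A * Mφ / c ^ 2, by positivity, ?_⟩
  intro σ φ hσ hφ hφ₀ hsupp hφc hφM r hr hdiam x hx x' hx' y _
  have hnum := abs_scaledBump_sub_le (d := d) hφ hr (x - y) (x' - y)
  rw [dist_sub_right] at hnum
  have hbdd : |scaledBump d φ r (x' - y)| ≤ Mφ * r ^ (-(d : ℝ)) := by
    rw [abs_of_nonneg (scaledBump_nonneg hφ₀ hr.le _)]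
    exact scaledBump_le hφM hr.le _
  rw [sKer_eq_scaledBump_div, sKer_eq_scaledBump_div]
  refine (abs_div_sub_div_le hnum hbdd
    (hσ.abs_phiConv_sub_le hA.le hφ hφ₀ hφM hsupp hr hdiam hx hx') hc
    (hσ.le_phiConv hc₀.le hφ hφ₀ hφM hsupp hφc hr hdiam hx)
    (hσ.le_phiConv hc₀.le hφ hφ₀ hφM hsupp hφc hr hdiam hx')).trans_eq ?_
  rw [Real.rpow_sub_one hr.ne']
  field_simp
end
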